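/- Consider the Speh configuration with parameters (h,t), h ≥ t ≥ 1, n := h·t, an integer 0 < s < n, d := gcd(n,s), m := n/d, and fix a positive integer α. Assume m divides t or m divides h. Then the permutation w_0 is well defined, and there exists a non-crossing strict Dyck t-path from ux^{w_0} to uy (for each a one may take the path that first makes all its east steps and then all its north-east steps); in particular Dyck⁺_strict(ux^{w_0}, uy) ≠ 0 in A⁺. -/

import Mathlib

open scoped BigOperators

/-- The weight ring `A⁺ = ℂ[ℚ]`, the group algebra of the additive group `ℚ`. -/
abbrev Aplus : Type := AddMonoidAlgebra ℂ ℚ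

/-- The basis element `q^x` of `A⁺`. -/
noncomputable def qpow (x : ℚ) : Aplus := AddMonoidAlgebra.single x 1

/-- `ℚ/ℤ`. -/
abbrev QmodZ : Type := ℚ ⧸ AddSubgroup.zmultiples (1 : ℚ)

/-- Reduction of a rational number modulo `ℤ`. -/
def ratMod (x : ℚ) : QmodZ := QuotientAddGroup.mk' _ x

/-- The invariant of a point of `ℚ²`: its second coordinate mod `ℤ`. -/
def invPt (v : ℚ × ℚ) : QmodZ := ratMod v.2

/-- The point `ℓ(x)` on the line of slope `slope` through the origin. -/
def linePt (slope x : ℚ) : ℚ × ℚ := (x, slope * x)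

/-- A lattice path: a starting point together with a list of steps;
`false` is an east step `(1,0)`, `true` a north-east step `(1,1)`. -/
structure LPath where
  start : ℚ × ℚ
  steps : List Bool

namespace LPath

/-- The displacement of a step. -/
def stepVec (b : Bool) : ℚ × ℚ := (1, if b then 1 else 0)

/-- The list of vertices of a path (including the first and last points). -/
def vertices (L : LPath) : List (ℚ × ℚ) :=
  L.steps.scanl (fun v b => v + stepVec b) L.start

/-- The endpoint of a path. -/
def endpt (L : LPath) : ℚ × ℚ :=
  L.steps.foldl (fun v b => v + stepVec b) L.start

/-- The exponent of `q` in the weight of a path for degree `α`: a north-east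
step starting at `(a,b)` contributes `-α·a`, an east step contributes `0`. -/
def expnt (α : ℕ) (L : LPath) : ℚ :=
  ((L.steps.zipIdx.map Prod.swap).map (fun p : ℕ × Bool =>
    if p.2 then -(α : ℚ) * (L.start.1 + (p.1 : ℚ)) else 0)).sum

/-- The weight of a path: the product of the weights of its steps. -/
noncomputable def weight (α : ℕ) (L : LPath) : Aplus := qpow (L.expnt α)

/-- All vertices of the path lie on or below the line of slope `slope`
through the origin. -/
def IsBelow (slope : ℚ) (L : LPath) : Prop :=
  ∀ v ∈ L.vertices, v.2 ≤ slope * v.1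

/-- No vertex of the path other than the first and the last lies on the
line of slope `slope` through the origin. -/
def OffLineInterior (slope : ℚ) (L : LPath) : Prop :=
  ∀ v ∈ (L.vertices.drop 1).dropLast, v.2 ≠ slope * v.1

/-- Dyck path: all vertices on or below the line. -/
def IsDyck (slope : ℚ) (L : LPath) : Prop := IsBelow slope L

/-- Strict Dyck path: Dyck, and no interior vertex on the line. -/
def IsStrictDyck (slope : ℚ) (L : LPath) : Prop :=
  IsBelow slope L ∧ OffLineInterior slope L

end LPath

/-- A `t`-path from `x` to `y`: for each `a`, the path `L a` goes from
`x a` to `y a`. -/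
def FamFromTo {t : ℕ} (x y : Fin t → ℚ × ℚ) (L : Fin t → LPath) : Prop :=
  ∀ a, (L a).start = x a ∧ (L a).endpt = y a

/-- A `t`-path is crossing if two distinct member paths share a vertex. -/
def Crossing {t : ℕ} (L : Fin t → LPath) : Prop :=
  ∃ a b, a ≠ b ∧ ∃ v, v ∈ (L a).vertices ∧ v ∈ (L b).vertices

/-- The weight of a `t`-path: the product of the weights of its members. -/
noncomputable def famWeight (α : ℕ) {t : ℕ} (L : Fin t → LPath) : Aplus :=
  ∏ a, (L a).weight α

/-- `Dyck(x,y)`: the sum of the weights of all Dyck `t`-paths from `x` to `y`. -/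
noncomputable def DyckPoly (α : ℕ) (slope : ℚ) {t : ℕ} (x y : Fin t → ℚ × ℚ) : Aplus :=
  ∑ᶠ L ∈ {L : Fin t → LPath | FamFromTo x y L ∧ ∀ a, (L a).IsDyck slope}, famWeight α L

/-- `Dyck⁺(x,y)`: the sum over the non-crossing Dyck `t`-paths only. -/
noncomputable def DyckPolyNC (α : ℕ) (slope : ℚ) {t : ℕ} (x y : Fin t → ℚ × ℚ) : Aplus :=
  ∑ᶠ L ∈ {L : Fin t → LPath |
    FamFromTo x y L ∧ (∀ a, (L a).IsDyck slope) ∧ ¬ Crossing L}, famWeight α L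

/-- `Dyck_strict(x,y)`: the sum over the strict Dyck `t`-paths. -/
noncomputable def DyckPolyStrict (α : ℕ) (slope : ℚ) {t : ℕ} (x y : Fin t → ℚ × ℚ) : Aplus :=
  ∑ᶠ L ∈ {L : Fin t → LPath | FamFromTo x y L ∧ ∀ a, (L a).IsStrictDyck slope}, famWeight α L

/-- `Dyck⁺_strict(x,y)`: the sum over the non-crossing strict Dyck `t`-paths. -/
noncomputable def DyckPolyStrictNC (α : ℕ) (slope : ℚ) {t : ℕ} (x y : Fin t → ℚ × ℚ) : Aplus :=
  ∑ᶠ L ∈ {L : Fin t → LPath |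
    FamFromTo x y L ∧ (∀ a, (L a).IsStrictDyck slope) ∧ ¬ Crossing L}, famWeight α L

/-- The starting points `ux_a = ℓ(x_a)`, `x_a = (t-h)/2 - (a-1)`, of the Speh
configuration with parameters `(h,t)`; here `a : Fin t` is `0`-based. -/
def spehUX (slope : ℚ) (h t : ℕ) (a : Fin t) : ℚ × ℚ :=
  linePt slope (((t : ℚ) - (h : ℚ)) / 2 - (a.val : ℚ))

/-- The end points `uy_a = ℓ(y_a + 1)`, `y_a = (t+h)/2 - a`, of the Speh
configuration with parameters `(h,t)`; here `a : Fin t` is `0`-based. -/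
def spehUY (slope : ℚ) (h t : ℕ) (a : Fin t) : ℚ × ℚ :=
  linePt slope (((t : ℚ) + (h : ℚ)) / 2 - (a.val : ℚ))

/-- The defining property of the permutation `w₀`: it matches invariants,
`ρ(x_{w a}) = ρ(y_a)` for all `a`, and it reverses the order within each
invariant class: `w b < w a` whenever `a < b` and `ρ(y_a) = ρ(y_b)`. -/
def IsW0 {t : ℕ} (x y : Fin t → ℚ × ℚ) (w : Equiv.Perm (Fin t)) : Prop :=
  (∀ a, invPt (x (w a)) = invPt (y a)) ∧
  ∀ a b : Fin t, a < b → invPt (y a) = invPt (y b) → w b < w a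

/-!
Within an invariant class the permutation `w₀` matches starting and end points in reverse
order. It exists because some invariant-preserving permutation does (the identity if `m ∣ h`,
the rotation `a ↦ a - h` of `Fin t` if `m ∣ t`), so every class contains as many starting as
end points; it is unique because a strictly antitone bijection out of a finite linear order is.

For a matched pair the horizontal distance `ℓ = h + w₀ a - a` is a natural number and
`slope · ℓ ∈ ℤ`, so the hook of `ℓ - slope · ℓ` east steps followed by `slope · ℓ` north-east
steps joins the two points strictly below the line. Two hooks sharing a vertex have the same
invariant, hence by the order reversal one is nested inside the other, and then it lies strictly
below it. Finally the augmentation `ℂ[ℚ] → ℂ` sends every weight to `1`, so it sends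
`Dyck⁺_strict` to the positive number of such families.
-/

theorem ratMod_eq_ratMod_iff {x y : ℚ} : ratMod x = ratMod y ↔ ∃ k : ℤ, x - y = k := by
  simp [ratMod, QuotientAddGroup.eq_iff_sub_mem, AddSubgroup.mem_zmultiples_iff, eq_comm]

namespace LPath

def vertex (L : LPath) (i : ℕ) : ℚ × ℚ :=
  L.start + ((i : ℚ), ((L.steps.take i).count true : ℚ))

theorem foldl_add_stepVec (l : List Bool) (v : ℚ × ℚ) :
    l.foldl (fun v b => v + stepVec b) v = v + ((l.length : ℚ), (l.count true : ℚ)) := by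
  induction l generalizing v with
  | nil => simp
  | cons b l ih =>
    rw [List.foldl_cons, ih]
    cases b <;> ext <;> simp [stepVec] <;> ring

theorem length_vertices (L : LPath) : L.vertices.length = L.steps.length + 1 :=
  List.length_scanl

theorem getElem_vertices (L : LPath) {i : ℕ} (hi : i < L.vertices.length) :
    L.vertices[i] = L.vertex i := by
  simp only [vertices, List.getElem_scanl, foldl_add_stepVec, vertex, List.length_take]
  rw [min_eq_left (by rw [length_vertices] at hi; omega)]

theorem mem_vertices {L : LPath} {u : ℚ × ℚ} :
    u ∈ L.vertices ↔ ∃ i ≤ L.steps.length, L.vertex i = u := by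
  simp only [List.mem_iff_getElem, getElem_vertices, length_vertices, Nat.lt_succ_iff,
    exists_prop]

theorem exists_vertex_of_mem_interior {L : LPath} {u : ℚ × ℚ}
    (hu : u ∈ (L.vertices.drop 1).dropLast) :
    ∃ i, 0 < i ∧ i < L.steps.length ∧ L.vertex i = u := by
  obtain ⟨i, hi, rfl⟩ := List.mem_iff_getElem.1 hu
  simp only [List.length_dropLast, List.length_drop, length_vertices] at hi
  refine ⟨i + 1, by omega, by omega, ?_⟩
  simp only [List.getElem_dropLast, List.getElem_drop, getElem_vertices, add_comm]

theorem endpt_eq_vertex (L : LPath) : L.endpt = L.vertex L.steps.length := by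
  rw [endpt, foldl_add_stepVec, vertex, List.take_length]

theorem endpt_fst (L : LPath) : L.endpt.1 = L.start.1 + L.steps.length := by
  simp [endpt_eq_vertex, vertex]

theorem invPt_of_mem_vertices {L : LPath} {u : ℚ × ℚ} (hu : u ∈ L.vertices) :
    invPt u = invPt L.start := by
  obtain ⟨i, -, rfl⟩ := mem_vertices.1 hu
  exact ratMod_eq_ratMod_iff.2 ⟨(L.steps.take i).count true, by simp [vertex]⟩

def hook (v : ℚ × ℚ) (p q : ℕ) : LPath := ⟨v, List.replicate p false ++ List.replicate q true⟩

theorem hook_vertex (v : ℚ × ℚ) (p q i : ℕ) :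
    (hook v p q).vertex i = v + ((i : ℚ), ((min (i - p) q : ℕ) : ℚ)) := by
  simp [vertex, hook, List.take_append, List.take_replicate, List.count_replicate]

theorem length_hook (v : ℚ × ℚ) (p q : ℕ) : (hook v p q).steps.length = p + q := by
  simp [hook]

section OnLine

variable {sl x : ℚ} {p q : ℕ}

-- The hook runs along the upper envelope of the horizontal line through its start and the
-- diagonal through its end.
theorem hook_linePt_vertex (hq : (q : ℚ) = sl * (p + q)) {i : ℕ} (hi : i ≤ p + q) :
    (hook (linePt sl x) p q).vertex i
      = (x + i, max (sl * x) (x + i - (1 - sl) * (x + p + q))) := by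
  rw [hook_vertex, min_eq_left (by omega)]
  refine Prod.ext (by simp [linePt]) ?_
  simp only [linePt, Prod.snd_add]
  rcases le_total i p with hip | hpi
  · rw [Nat.sub_eq_zero_of_le hip, max_eq_left]
    · simp
    · have : (i : ℚ) ≤ p := by exact_mod_cast hip
      linarith
  · rw [Nat.cast_sub hpi, max_eq_right]
    · linarith
    · have : (p : ℚ) ≤ i := by exact_mod_cast hpi
      linarith

theorem endpt_hook_linePt (hq : (q : ℚ) = sl * (p + q)) :
    (hook (linePt sl x) p q).endpt = linePt sl (x + p + q) := by
  rw [endpt_eq_vertex, length_hook, hook_vertex, Nat.add_sub_cancel_left, min_self]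
  refine Prod.ext ?_ ?_ <;> simp only [linePt, Prod.fst_add, Prod.snd_add] <;> push_cast <;>
    linarith

theorem isStrictDyck_hook (hs0 : 0 < sl) (hs1 : sl < 1) (hq : (q : ℚ) = sl * (p + q)) :
    (hook (linePt sl x) p q).IsStrictDyck sl := by
  constructor
  · intro u hu
    obtain ⟨i, hi, rfl⟩ := mem_vertices.1 hu
    rw [length_hook] at hi
    have hi' : (i : ℚ) ≤ p + q := by exact_mod_cast hi
    rw [hook_linePt_vertex hq hi]
    refine max_le ?_ ?_ <;> nlinarith [(Nat.cast_nonneg i : (0 : ℚ) ≤ i)]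
  · intro u hu
    obtain ⟨i, hi0, hi, rfl⟩ := exists_vertex_of_mem_interior hu
    rw [length_hook] at hi
    have hi0' : (0 : ℚ) < i := by exact_mod_cast hi0
    have hi' : (i : ℚ) < p + q := by exact_mod_cast hi
    rw [hook_linePt_vertex hq hi.le]
    refine (max_lt ?_ ?_).ne <;> nlinarith

theorem hook_linePt_vertices_disjoint (hs0 : 0 < sl) (hs1 : sl < 1) {x' : ℚ} {p' q' : ℕ}
    (hq : (q : ℚ) = sl * (p + q)) (hq' : (q' : ℚ) = sl * (p' + q'))
    (hx : x < x') (hy : x' + p' + q' < x + p + q) {u : ℚ × ℚ}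
    (hu : u ∈ (hook (linePt sl x) p q).vertices) : u ∉ (hook (linePt sl x') p' q').vertices := by
  intro hu'
  obtain ⟨i, hi, rfl⟩ := mem_vertices.1 hu
  obtain ⟨j, hj, hij⟩ := mem_vertices.1 hu'
  rw [length_hook] at hi hj
  rw [hook_linePt_vertex hq hi, hook_linePt_vertex hq' hj, Prod.mk.injEq] at hij
  obtain ⟨h1, h2⟩ := hij
  rw [h1] at h2
  refine (max_lt_max ?_ ?_).ne' h2 <;> nlinarith

end OnLine

end LPath

theorem finite_setOf_famFromTo {t : ℕ} (x y : Fin t → ℚ × ℚ) :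
    {L : Fin t → LPath | FamFromTo x y L}.Finite := by
  refine Set.Finite.of_finite_image (f := fun L a => (L a).steps) ?_ ?_
  · refine (Set.Finite.pi' fun a => List.finite_length_le Bool ⌈(y a).1 - (x a).1⌉₊).subset ?_
    rintro _ ⟨L, hL, rfl⟩ a
    have hlen := (L a).endpt_fst
    rw [(hL a).1, (hL a).2] at hlen
    have : ((L a).steps.length : ℚ) ≤ ⌈(y a).1 - (x a).1⌉₊ := by
      rw [hlen, add_sub_cancel_left]; exact Nat.le_ceil _
    exact_mod_cast this
  · intro L hL L' hL' hsteps
    simp only at hsteps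
    funext a
    calc L a = ⟨(L a).start, (L a).steps⟩ := rfl
      _ = ⟨(L' a).start, (L' a).steps⟩ := by rw [(hL a).1, (hL' a).1, congrFun hsteps a]
      _ = L' a := rfl

theorem finsum_famWeight_ne_zero (α : ℕ) {t : ℕ} {x y : Fin t → ℚ × ℚ}
    {S : Set (Fin t → LPath)} (hS : S ⊆ {L | FamFromTo x y L}) (hne : S.Nonempty) :
    ∑ᶠ L ∈ S, famWeight α L ≠ 0 := by
  have hfin : S.Finite := (finite_setOf_famFromTo x y).subset hS
  let ε : Aplus →ₐ[ℂ] ℂ := AddMonoidAlgebra.lift ℂ ℂ ℚ 1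
  have hε : ∀ L : Fin t → LPath, ε (famWeight α L) = 1 := fun L => by
    simp [ε, famWeight, LPath.weight, qpow, AddMonoidAlgebra.lift_single]
  intro hzero
  rw [finsum_mem_eq_finite_toFinset_sum _ hfin] at hzero
  have hcard := congrArg ε hzero
  simp only [map_sum, hε, map_zero, Finset.sum_const, nsmul_eq_mul, mul_one,
    Nat.cast_eq_zero, Finset.card_eq_zero, Set.Finite.toFinset_eq_empty] at hcard
  exact hne.ne_empty hcard

section AntitoneMatching

variable {ι κ : Type*} [LinearOrder ι] {f g : ι → κ}

theorem eq_of_antitone_matching [WellFoundedLT ι] {w w' : Equiv.Perm ι}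
    (hw : ∀ a, g (w a) = f a) (hw_anti : ∀ a b, a < b → f a = f b → w b < w a)
    (hw' : ∀ a, g (w' a) = f a) (hw'_anti : ∀ a b, a < b → f a = f b → w' b < w' a) :
    w = w' := by
  ext a
  have key : ∀ v : Equiv.Perm ι, (∀ a, g (v a) = f a) →
      (∀ a b, a < b → f a = f b → v b < v a) →
      StrictMono (fun b : {b // f b = f a} => OrderDual.toDual (v b)) ∧
        Set.range (fun b : {b // f b = f a} => OrderDual.toDual (v b))
          = {c | g (OrderDual.ofDual c) = f a} := by
    intro v hv hv_anti
    refine ⟨fun b b' hbb' => hv_anti b b' hbb' (b.2.trans b'.2.symm), ?_⟩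
    ext c
    refine ⟨?_, fun hc => ⟨⟨v.symm (OrderDual.ofDual c), ?_⟩, by simp⟩⟩
    · rintro ⟨b, rfl⟩
      exact (hv b).trans b.2
    · rw [← hv, Equiv.apply_symm_apply]
      exact hc
  obtain ⟨hmono, hrange⟩ := key w hw hw_anti
  obtain ⟨hmono', hrange'⟩ := key w' hw' hw'_anti
  exact congrFun ((hmono.range_inj hmono').1 (hrange.trans hrange'.symm)) ⟨a, rfl⟩

theorem exists_antitone_matching [Fintype ι] (σ : Equiv.Perm ι) (hσ : ∀ a, g (σ a) = f a) :
    ∃ w : Equiv.Perm ι, (∀ a, g (w a) = f a) ∧ ∀ a b, a < b → f a = f b → w b < w a := by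
  classical
  have hcard : ∀ k, Fintype.card {c // g c = k}ᵒᵈ = Fintype.card {a // f a = k} := fun k =>
    Fintype.card_congr (σ.subtypeEquiv fun a => by rw [hσ]).symm
  let e : ∀ k, {a // f a = k} ≃o {c // g c = k}ᵒᵈ := fun k =>
    (Fintype.orderIsoFinOfCardEq _ rfl).symm.trans (Fintype.orderIsoFinOfCardEq _ (hcard k))
  let w : Equiv.Perm ι := Equiv.ofFiberEquiv fun k => (e k).toEquiv.trans OrderDual.ofDual
  have hw : ∀ k a (ha : f a = k), w a = (OrderDual.ofDual (e k ⟨a, ha⟩)).1 := by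
    rintro k a rfl
    rfl
  refine ⟨w, Equiv.ofFiberEquiv_map _, fun a b hab hfab => ?_⟩
  rw [hw (f a) a rfl, hw (f a) b hfab.symm]
  exact (e (f a)).strictMono (show (⟨a, rfl⟩ : {x // f x = f a}) < ⟨b, hfab.symm⟩ from hab)

theorem existsUnique_antitone_matching [Fintype ι] (σ : Equiv.Perm ι)
    (hσ : ∀ a, g (σ a) = f a) :
    ∃! w : Equiv.Perm ι, (∀ a, g (w a) = f a) ∧ ∀ a b, a < b → f a = f b → w b < w a := by
  obtain ⟨w, hw⟩ := exists_antitone_matching σ hσ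
  exact ⟨w, hw, fun w' hw' => eq_of_antitone_matching hw'.1 hw'.2 hw.1 hw.2⟩

end AntitoneMatching

theorem exists_int_div_mul_eq_of_dvd {n s k : ℕ} (hn : n ≠ 0) (hk : n / n.gcd s ∣ k) :
    ∃ z : ℤ, (s : ℚ) / n * k = z := by
  obtain ⟨j, rfl⟩ := hk
  have hd : (n.gcd s : ℚ) ≠ 0 := by exact_mod_cast (Nat.gcd_pos_of_pos_left s hn.bot_lt).ne'
  refine ⟨(s / n.gcd s * j : ℕ), ?_⟩
  rw [Int.cast_natCast, Nat.cast_mul, Nat.cast_mul, Nat.cast_div (Nat.gcd_dvd_left n s) hd,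
    Nat.cast_div (Nat.gcd_dvd_right n s) hd]
  field_simp

theorem exists_hook_counts {sl : ℚ} (hs0 : 0 ≤ sl) (hs1 : sl ≤ 1) (ℓ : ℕ) {z : ℤ}
    (hz : sl * ℓ = z) : ∃ p q : ℕ, p + q = ℓ ∧ (q : ℚ) = sl * (p + q) := by
  have hz0 : 0 ≤ z := by
    have : (0 : ℚ) ≤ z := hz ▸ by positivity
    exact_mod_cast this
  have hzℓ : z ≤ ℓ := by
    have : (z : ℚ) ≤ ℓ := hz ▸ mul_le_of_le_one_left (by positivity) hs1
    exact_mod_cast this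
  refine ⟨ℓ - z.toNat, z.toNat, by omega, ?_⟩
  rw [← Nat.cast_add, Nat.sub_add_cancel (by omega), hz]
  exact_mod_cast Int.toNat_of_nonneg hz0

section Speh

variable {sl : ℚ} {h t : ℕ}

theorem invPt_spehUX_eq_invPt_spehUY_iff (c a : Fin t) :
    invPt (spehUX sl h t c) = invPt (spehUY sl h t a) ↔
      ∃ z : ℤ, sl * ((h : ℚ) + c - a) = z := by
  rw [eq_comm]
  change ratMod (sl * _) = ratMod (sl * _) ↔ _
  rw [ratMod_eq_ratMod_iff, ← mul_sub]
  ring_nf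

theorem exists_speh_matching [NeZero t] {n s : ℕ} (hn : n ≠ 0)
    (hm : n / n.gcd s ∣ t ∨ n / n.gcd s ∣ h) :
    ∃ σ : Equiv.Perm (Fin t), ∀ a,
      invPt (spehUX ((s : ℚ) / n) h t (σ a)) = invPt (spehUY ((s : ℚ) / n) h t a) := by
  simp only [invPt_spehUX_eq_invPt_spehUY_iff]
  rcases hm with hmt | hmh
  · refine ⟨Equiv.subRight (Fin.ofNat t h), fun a => ?_⟩
    obtain ⟨c, rfl⟩ := (Equiv.addRight (Fin.ofNat t h)).surjective a
    obtain ⟨z, hz⟩ := exists_int_div_mul_eq_of_dvd hn (hmt.mul_right ((c + h) / t))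
    refine ⟨z, ?_⟩
    have hval : ((c + h : ℕ) % t : ℕ) + t * ((c + h) / t) = c + h := Nat.mod_add_div _ _
    simp only [Equiv.subRight_apply, Equiv.coe_addRight, add_sub_cancel_right, Fin.val_add,
      Fin.val_ofNat, Nat.add_mod_mod]
    rw [← hz]
    congr 1
    have : (((c + h : ℕ) % t : ℕ) : ℚ) + t * ((c + h) / t : ℕ) = c + h := by exact_mod_cast hval
    push_cast at this ⊢
    linarith
  · obtain ⟨z, hz⟩ := exists_int_div_mul_eq_of_dvd hn hmh
    exact ⟨1, fun a => ⟨z, by simpa using hz⟩⟩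

theorem exists_speh_hook_family (hth : t ≤ h) (hs0 : 0 < sl) (hs1 : sl < 1)
    {w : Equiv.Perm (Fin t)} (hw : IsW0 (spehUX sl h t) (spehUY sl h t) w) :
    ∃ L : Fin t → LPath,
      FamFromTo (fun a => spehUX sl h t (w a)) (spehUY sl h t) L ∧
      (∀ a, (L a).IsStrictDyck sl) ∧ ¬ Crossing L ∧
      ∀ a, ∃ p q : ℕ, (L a).steps = List.replicate p false ++ List.replicate q true := by
  have hcounts : ∀ a : Fin t, ∃ p q : ℕ,
      (p : ℚ) + q = h + (w a : ℕ) - (a : ℕ) ∧ (q : ℚ) = sl * (p + q) := by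
    intro a
    obtain ⟨z, hz⟩ := (invPt_spehUX_eq_invPt_spehUY_iff (w a) a).1 (hw.1 a)
    have hle : (a : ℕ) ≤ h + w a := by omega
    have hcast : ((h + w a - a : ℕ) : ℚ) = h + (w a : ℕ) - (a : ℕ) := by push_cast [hle]; ring
    obtain ⟨p, q, hpq, hq⟩ := exists_hook_counts hs0.le hs1.le (h + w a - a) (hcast ▸ hz)
    exact ⟨p, q, by rw [← hcast, ← hpq]; push_cast; ring, hq⟩
  choose p q hpq hq using hcounts
  refine ⟨fun a => LPath.hook (spehUX sl h t (w a)) (p a) (q a), fun a => ⟨rfl, ?_⟩,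
    fun a => LPath.isStrictDyck_hook hs0 hs1 (hq a), ?_, fun a => ⟨p a, q a, rfl⟩⟩
  · refine (LPath.endpt_hook_linePt (hq a)).trans (congrArg (linePt sl) ?_)
    linarith [hpq a]
  have nested : ∀ a b, a < b → invPt (spehUY sl h t a) = invPt (spehUY sl h t b) →
      ∀ u, u ∈ (LPath.hook (spehUX sl h t (w a)) (p a) (q a)).vertices →
      u ∉ (LPath.hook (spehUX sl h t (w b)) (p b) (q b)).vertices := by
    intro a b hab hcls u hua
    have hwba : ((w b : ℕ) : ℚ) < (w a : ℕ) := by exact_mod_cast hw.2 a b hab hcls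
    have hab' : ((a : ℕ) : ℚ) < (b : ℕ) := by exact_mod_cast hab
    exact LPath.hook_linePt_vertices_disjoint hs0 hs1 (hq a) (hq b) (by linarith)
      (by linarith [hpq a, hpq b]) hua
  rintro ⟨a, b, hab, u, hua, hub⟩
  have hcls : invPt (spehUY sl h t a) = invPt (spehUY sl h t b) := by
    rw [← hw.1 a, ← hw.1 b]
    exact (LPath.invPt_of_mem_vertices hua).symm.trans (LPath.invPt_of_mem_vertices hub)
  rcases hab.lt_or_gt with hlt | hgt
  · exact nested a b hlt hcls u hua hub
  · exact nested b a hgt hcls.symm u hub hua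

end Speh

theorem statement5_general (h t : ℕ) (ht : 1 ≤ t) (hth : t ≤ h) (s : ℕ)
    (hs0 : 0 < s) (hsn : s < h * t) (α : ℕ)
    (hm : (h * t) / Nat.gcd (h * t) s ∣ t ∨ (h * t) / Nat.gcd (h * t) s ∣ h) :
    let n : ℕ := h * t
    let slope : ℚ := (s : ℚ) / (n : ℚ)
    let ux : Fin t → ℚ × ℚ := spehUX slope h t
    let uy : Fin t → ℚ × ℚ := spehUY slope h t
    (∃! w0 : Equiv.Perm (Fin t), IsW0 ux uy w0) ∧
    ∀ w0 : Equiv.Perm (Fin t), IsW0 ux uy w0 →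
      (∃ L : Fin t → LPath,
        FamFromTo (fun a => ux (w0 a)) uy L ∧
        (∀ a, (L a).IsStrictDyck slope) ∧
        ¬ Crossing L ∧
        ∀ a, ∃ p q : ℕ, (L a).steps = List.replicate p false ++ List.replicate q true) ∧
      DyckPolyStrictNC α slope (fun a => ux (w0 a)) uy ≠ 0 := by
  intro n slope ux uy
  have hn : 0 < n := by omega
  have hslope0 : 0 < slope := by positivity
  have hslope1 : slope < 1 := (div_lt_one (by positivity)).2 (by exact_mod_cast hsn)
  have : NeZero t := ⟨by omega⟩
  obtain ⟨σ, hσ⟩ := exists_speh_matching hn.ne' hm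
  refine ⟨existsUnique_antitone_matching (f := fun a => invPt (uy a)) (g := fun c => invPt (ux c))
    σ hσ, fun w hw => ?_⟩
  obtain ⟨L, hfam, hdyck, hnc, hshape⟩ := exists_speh_hook_family hth hslope0 hslope1 hw
  exact ⟨⟨L, hfam, hdyck, hnc, hshape⟩,
    finsum_famWeight_ne_zero α (fun L hL => hL.1) ⟨L, hfam, hdyck, hnc⟩⟩

/-- For the Speh configuration with parameters `(h,t)`, `h ≥ t ≥ 1`,
`n = h·t`, `0 < s < n`, `m = n / gcd(n,s)`, if `m ∣ t` or `m ∣ h` then the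
permutation `w₀` is well defined (exists and is unique), and there is a
non-crossing strict Dyck `t`-path from `ux^{w₀}` to `uy` in which each member
path first makes all its east steps and then all its north-east steps; in
particular `Dyck⁺_strict(ux^{w₀}, uy) ≠ 0`. -/
theorem statement5 (h t : ℕ) (ht : 1 ≤ t) (hth : t ≤ h) (s : ℕ)
    (hs0 : 0 < s) (hsn : s < h * t) (α : ℕ) (hα : 1 ≤ α)
    (hm : (h * t) / Nat.gcd (h * t) s ∣ t ∨ (h * t) / Nat.gcd (h * t) s ∣ h) :
    let n : ℕ := h * t
    let slope : ℚ := (s : ℚ) / (n : ℚ)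
    let ux : Fin t → ℚ × ℚ := spehUX slope h t
    let uy : Fin t → ℚ × ℚ := spehUY slope h t
    (∃! w0 : Equiv.Perm (Fin t), IsW0 ux uy w0) ∧
    ∀ w0 : Equiv.Perm (Fin t), IsW0 ux uy w0 →
      (∃ L : Fin t → LPath,
        FamFromTo (fun a => ux (w0 a)) uy L ∧
        (∀ a, (L a).IsStrictDyck slope) ∧
        ¬ Crossing L ∧
        ∀ a, ∃ p q : ℕ, (L a).steps = List.replicate p false ++ List.replicate q true) ∧
      DyckPolyStrictNC α slope (fun a => ux (w0 a)) uy ≠ 0 :=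
  statement5_general h t ht hth s hs0 hsn α hm
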